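/- For every trapezoidal word w over {a,b}, the unordered pair {H_w, L_w} equals the unordered pair {K_w, R_w}. -/
import Mathlib


/-- The two-letter alphabet {a, b}. -/
inductive AB : Type
  | a : AB
  | b : AB
deriving DecidableEq, Repr

/-- A (finite) word over {a, b}. -/
abbrev Word := List AB

open AB

/-- `u` occurs in `w` at position `i`. -/
def OccursAt (u w : Word) (i : ℕ) : Prop :=
  i + u.length ≤ w.length ∧ (w.drop i).take u.length = u

/-- `u` occurs exactly once in `w` (is unrepeated in `w`). -/
def OccursOnce (u w : Word) : Prop := ∃! i, OccursAt u w i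

/-- `u` is a right special factor of `w`: both `ua` and `ub` are factors of `w`. -/
def IsRightSpecial (u w : Word) : Prop := (u ++ [a]) <:+: w ∧ (u ++ [b]) <:+: w

/-- `u` is a left special factor of `w`: both `au` and `bu` are factors of `w`. -/
def IsLeftSpecial (u w : Word) : Prop := ([a] ++ u) <:+: w ∧ ([b] ++ u) <:+: w

/-- `K w`: the length of the shortest unrepeated suffix of `w`. -/
noncomputable def Kp (w : Word) : ℕ := sInf {n | ∃ s : Word, s <:+ w ∧ s.length = n ∧ OccursOnce s w}

/-- `H w`: the length of the shortest unrepeated prefix of `w`. -/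
noncomputable def Hp (w : Word) : ℕ := sInf {n | ∃ p : Word, p <+: w ∧ p.length = n ∧ OccursOnce p w}

/-- `R w`: the smallest `n ≥ 0` such that `w` has no right special factor of length `n`. -/
noncomputable def Rp (w : Word) : ℕ := sInf {n | ∀ u : Word, u.length = n → ¬ IsRightSpecial u w}

/-- `L w`: the smallest `n ≥ 0` such that `w` has no left special factor of length `n`. -/
noncomputable def Lp (w : Word) : ℕ := sInf {n | ∀ u : Word, u.length = n → ¬ IsLeftSpecial u w}

/-- A word `w` is trapezoidal if `|w| = K w + R w`. -/
def IsTrapezoidal (w : Word) : Prop := w.length = Kp w + Rp w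

/-- A finite word over `{a,b}` is Sturmian iff it is balanced: there is no word `u`
with both `aua` and `bub` factors of `w`. -/
def IsSturmian (w : Word) : Prop :=
  ¬ ∃ u : Word, ([a] ++ u ++ [a]) <:+: w ∧ ([b] ++ u ++ [b]) <:+: w

/-- A nonempty word is closed if it has a border (a proper prefix which is also a suffix)
whose only occurrences in `w` are as a prefix and as a suffix. -/
def IsClosedWord (w : Word) : Prop :=
  w ≠ [] ∧ ∃ v : Word, v <+: w ∧ v.length < w.length ∧ v <:+ w ∧
    ∀ i : ℕ, OccursAt v w i → i = 0 ∨ i + v.length = w.length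

/-- A nonempty word is open if it is not closed. -/
def IsOpenWord (w : Word) : Prop := w ≠ [] ∧ ¬ IsClosedWord w

/-- Central words: `a^n`, `b^n`, or `u a b v = v b a u`. -/
def IsCentral (w : Word) : Prop :=
  (∃ n : ℕ, w = List.replicate n a) ∨ (∃ n : ℕ, w = List.replicate n b) ∨
  (∃ u v : Word, w = u ++ [a, b] ++ v ∧ w = v ++ [b, a] ++ u)

/-- The minimal period of `w`: `|w|` minus the length of the longest border of `w`. -/
noncomputable def minPeriod (w : Word) : ℕ :=
  w.length - sSup {n | ∃ v : Word, v.length = n ∧ v <+: w ∧ v ≠ w ∧ v <:+ w}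

-- ### auxiliary development

lemma occursAt_iff_append {u w : Word} {i : ℕ} :
    OccursAt u w i ↔ ∃ s t : Word, s.length = i ∧ w = s ++ u ++ t := by
  constructor
  · rintro ⟨hle, hsl⟩
    refine ⟨w.take i, w.drop (i + u.length), ?_, ?_⟩
    · simp; omega
    · conv_lhs => rw [← List.take_append_drop i w]
      rw [List.append_assoc]
      congr 1
      conv_lhs => rw [← List.take_append_drop u.length (w.drop i)]
      rw [hsl, List.drop_drop]
  · rintro ⟨s, t, hs, rfl⟩
    subst hs
    constructor
    · simp
    · rw [List.append_assoc, List.drop_left, List.take_left]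

lemma infix_iff_occurs {u w : Word} : u <:+: w ↔ ∃ i, OccursAt u w i := by
  constructor
  · rintro ⟨s, t, rfl⟩
    exact ⟨s.length, occursAt_iff_append.2 ⟨s, t, rfl, rfl⟩⟩
  · rintro ⟨i, h⟩
    obtain ⟨s, t, -, rfl⟩ := occursAt_iff_append.1 h
    exact ⟨s, t, rfl⟩

lemma occursAt_rev {u w : Word} {i : ℕ} (h : OccursAt u w i) :
    OccursAt u.reverse w.reverse (w.length - u.length - i) := by
  obtain ⟨s, t, hs, rfl⟩ := occursAt_iff_append.1 h
  apply occursAt_iff_append.2 ⟨t.reverse, s.reverse, ?_, ?_⟩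
  · simp [hs]; omega
  · simp

lemma occursAt_bound {u w : Word} {i : ℕ} (h : OccursAt u w i) :
    i + u.length ≤ w.length := h.1

lemma occursOnce_rev {u w : Word} (h : OccursOnce u w) :
    OccursOnce u.reverse w.reverse := by
  obtain ⟨i, hi, huniq⟩ := h
  refine ⟨w.length - u.length - i, occursAt_rev hi, ?_⟩
  intro j hj
  have h2 := occursAt_rev hj
  simp only [List.reverse_reverse, List.length_reverse] at h2
  have hb := occursAt_bound hj
  simp only [List.length_reverse] at hb
  have := huniq _ h2
  have hbi := occursAt_bound hi
  omega

lemma occursAt_of_prefix {u v w : Word} {i : ℕ} (hp : v <+: u) (h : OccursAt u w i) :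
    OccursAt v w i := by
  obtain ⟨s, t, hs, rfl⟩ := occursAt_iff_append.1 h
  obtain ⟨r, rfl⟩ := hp
  exact occursAt_iff_append.2 ⟨s, r ++ t, hs, by simp⟩

lemma occursAt_of_suffix {u v w : Word} {i : ℕ} (hp : v <:+ u) (h : OccursAt u w i) :
    OccursAt v w (i + (u.length - v.length)) := by
  obtain ⟨s, t, hs, rfl⟩ := occursAt_iff_append.1 h
  obtain ⟨r, rfl⟩ := hp
  refine occursAt_iff_append.2 ⟨s ++ r, t, ?_, by simp⟩
  simp [hs]

open Classical in
noncomputable def fset (w : Word) (n : ℕ) : Finset Word :=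
  (Finset.range (w.length + 1 - n)).image (fun i => (w.drop i).take n)

noncomputable def cf (w : Word) (n : ℕ) : ℕ := (fset w n).card

open Classical in
noncomputable def rsf (w : Word) (n : ℕ) : ℕ :=
  ((fset w n).filter (fun u => IsRightSpecial u w)).card

open Classical in
noncomputable def lsf (w : Word) (n : ℕ) : ℕ :=
  ((fset w n).filter (fun u => IsLeftSpecial u w)).card

lemma mem_fset {u w : Word} {n : ℕ} : u ∈ fset w n ↔ u.length = n ∧ u <:+: w := by
  constructor
  · intro h
    simp only [fset, Finset.mem_image, Finset.mem_range] at h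
    obtain ⟨i, hi, rfl⟩ := h
    constructor
    · simp; omega
    · exact ((w.drop i).take_prefix n).isInfix.trans (w.drop_suffix i).isInfix
  · rintro ⟨rfl, hinf⟩
    obtain ⟨i, h⟩ := infix_iff_occurs.1 hinf
    simp only [fset, Finset.mem_image, Finset.mem_range]
    exact ⟨i, by have := h.1; omega, h.2⟩

-- ### interface for Kp, Hp, Rp, Lp

lemma w_occursOnce (w : Word) : OccursOnce w w := by
  refine ⟨0, ⟨by simp, by simp⟩, ?_⟩
  intro j hj
  have := hj.1; omega

lemma Kp_le_length (w : Word) : Kp w ≤ w.length :=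
  Nat.sInf_le ⟨w, List.suffix_rfl, rfl, w_occursOnce w⟩

lemma Hp_le_length (w : Word) : Hp w ≤ w.length :=
  Nat.sInf_le ⟨w, List.prefix_rfl, rfl, w_occursOnce w⟩

lemma infix_length_le {u w : Word} (h : u <:+: w) : u.length ≤ w.length := by
  obtain ⟨i, hi⟩ := infix_iff_occurs.1 h
  have := hi.1; omega

lemma Rp_le_length (w : Word) : Rp w ≤ w.length := by
  apply Nat.sInf_le
  intro u hu ⟨ha, _⟩
  have := infix_length_le ha
  simp [hu] at this

lemma Lp_le_length (w : Word) : Lp w ≤ w.length := by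
  apply Nat.sInf_le
  intro u hu ⟨ha, _⟩
  have := infix_length_le ha
  simp [hu] at this

lemma Rp_nonempty (w : Word) : {n | ∀ u : Word, u.length = n → ¬ IsRightSpecial u w}.Nonempty := by
  refine ⟨w.length, fun u hu ⟨ha, _⟩ => ?_⟩
  have := infix_length_le ha
  simp [hu] at this

lemma Lp_nonempty (w : Word) : {n | ∀ u : Word, u.length = n → ¬ IsLeftSpecial u w}.Nonempty := by
  refine ⟨w.length, fun u hu ⟨ha, _⟩ => ?_⟩
  have := infix_length_le ha
  simp [hu] at this

lemma suffix_append_infix {l u : Word} (h : l <:+ u) (x : Word) : (l ++ x) <:+: (u ++ x) := by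
  obtain ⟨t, rfl⟩ := h
  exact ⟨t, [], by simp⟩

lemma prefix_append_infix {l u : Word} (h : l <+: u) (x : Word) : (x ++ l) <:+: (x ++ u) := by
  obtain ⟨t, rfl⟩ := h
  exact ⟨[], t, by simp⟩

lemma Rp_le_iff {w : Word} {n : ℕ} :
    Rp w ≤ n ↔ ∀ u : Word, u.length = n → ¬ IsRightSpecial u w := by
  constructor
  · intro hle
    have hmem : ∀ u : Word, u.length = Rp w → ¬ IsRightSpecial u w :=
      Nat.sInf_mem (Rp_nonempty w)
    set m := Rp w with hm
    clear_value m
    induction n with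
    | zero =>
      obtain rfl : m = 0 := Nat.le_zero.1 hle
      exact hmem
    | succ k ih =>
      rcases Nat.lt_or_ge m (k+1) with h | h
      · have hk := ih (by omega)
        intro u hu ⟨ha, hb⟩
        have hd : (u.drop 1).length = k := by simp [hu]
        exact hk _ hd ⟨(suffix_append_infix (u.drop_suffix 1) [a]).trans ha,
          (suffix_append_infix (u.drop_suffix 1) [b]).trans hb⟩
      · have h2 : m = k + 1 := by omega
        rw [h2] at hmem
        exact hmem
  · intro h
    exact Nat.sInf_le h

lemma Lp_le_iff {w : Word} {n : ℕ} :
    Lp w ≤ n ↔ ∀ u : Word, u.length = n → ¬ IsLeftSpecial u w := by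
  constructor
  · intro hle
    have hmem : ∀ u : Word, u.length = Lp w → ¬ IsLeftSpecial u w :=
      Nat.sInf_mem (Lp_nonempty w)
    set m := Lp w with hm
    clear_value m
    induction n with
    | zero =>
      obtain rfl : m = 0 := Nat.le_zero.1 hle
      exact hmem
    | succ k ih =>
      rcases Nat.lt_or_ge m (k+1) with h | h
      · have hk := ih (by omega)
        intro u hu ⟨ha, hb⟩
        have hd : (u.dropLast).length = k := by simp [hu]
        exact hk _ hd ⟨(prefix_append_infix (u.dropLast_prefix) [a]).trans ha,
          (prefix_append_infix (u.dropLast_prefix) [b]).trans hb⟩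
      · have h2 : m = k + 1 := by omega
        rw [h2] at hmem
        exact hmem
  · intro h
    exact Nat.sInf_le h

lemma prefix_occursAt {p w : Word} (h : p <+: w) : OccursAt p w 0 := by
  obtain ⟨t, rfl⟩ := h
  exact occursAt_iff_append.2 ⟨[], t, rfl, by simp⟩

lemma suffix_occursAt {p w : Word} (h : p <:+ w) : OccursAt p w (w.length - p.length) := by
  obtain ⟨t, rfl⟩ := h
  refine occursAt_iff_append.2 ⟨t, [], ?_, by simp⟩
  simp

lemma Hp_le_iff {w : Word} {n : ℕ} (hn : n ≤ w.length) :
    Hp w ≤ n ↔ OccursOnce (w.take n) w := by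
  constructor
  · intro hle
    have hne : {m | ∃ p : Word, p <+: w ∧ p.length = m ∧ OccursOnce p w}.Nonempty :=
      ⟨w.length, w, List.prefix_rfl, rfl, w_occursOnce w⟩
    obtain ⟨p, hp, hlen, ⟨i, hi, huniq⟩⟩ :
        ∃ p : Word, p <+: w ∧ p.length = Hp w ∧ OccursOnce p w :=
      Nat.sInf_mem hne
    have hpeq : p <+: w.take n := by
      rw [List.prefix_iff_eq_take.1 hp, hlen]
      exact w.take_prefix_take_left hle
    refine ⟨0, prefix_occursAt (w.take_prefix n), ?_⟩
    intro j hj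
    rw [huniq _ (occursAt_of_prefix hpeq hj),
        huniq _ (occursAt_of_prefix hpeq (prefix_occursAt (w.take_prefix n)))]
  · intro h
    exact Nat.sInf_le ⟨w.take n, w.take_prefix n, by simp [hn], h⟩

lemma suffix_drop_le {w : Word} {m n : ℕ} (h : m ≤ n) : w.drop n <:+ w.drop m := by
  rw [show n = m + (n - m) by omega, ← List.drop_drop]
  exact (w.drop m).drop_suffix _

lemma Kp_le_iff {w : Word} {n : ℕ} (hn : n ≤ w.length) :
    Kp w ≤ n ↔ OccursOnce (w.drop (w.length - n)) w := by
  constructor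
  · intro hle
    have hne : {m | ∃ p : Word, p <:+ w ∧ p.length = m ∧ OccursOnce p w}.Nonempty :=
      ⟨w.length, w, List.suffix_rfl, rfl, w_occursOnce w⟩
    obtain ⟨p, hp, hlen, ⟨i, hi, huniq⟩⟩ :
        ∃ p : Word, p <:+ w ∧ p.length = Kp w ∧ OccursOnce p w :=
      Nat.sInf_mem hne
    have hpeq : p <:+ w.drop (w.length - n) := by
      rw [List.suffix_iff_eq_drop.1 hp, hlen]
      exact suffix_drop_le (by omega)
    have hocc : OccursAt (w.drop (w.length - n)) w (w.length - n) := by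
      have := suffix_occursAt (w.drop_suffix (w.length - n) : w.drop (w.length - n) <:+ w)
      rwa [List.length_drop, show w.length - (w.length - (w.length - n)) = w.length - n by omega] at this
    refine ⟨w.length - n, hocc, ?_⟩
    intro j hj
    have h1 := occursAt_of_suffix hpeq hj
    have h2 := occursAt_of_suffix hpeq hocc
    have e1 := huniq _ h1
    have e2 := huniq _ h2
    have hb := occursAt_bound hj
    have hlp : p.length ≤ (w.drop (w.length - n)).length := hpeq.length_le
    simp only [List.length_drop] at *
    omega
  · intro h
    exact Nat.sInf_le ⟨w.drop (w.length - n), w.drop_suffix _, by simp; omega, h⟩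

-- ### the right counting identity

lemma occursAt_extend {u w : Word} {i : ℕ} (h : OccursAt u w i) (hlt : i + u.length < w.length) :
    ∃ x : AB, (u ++ [x]) <:+: w := by
  obtain ⟨s, t, hs, rfl⟩ := occursAt_iff_append.1 h
  match t with
  | [] => simp [hs] at hlt
  | x :: t' => exact ⟨x, s, t', by simp⟩

open Classical in
lemma dead_iff {u w : Word} {n : ℕ} (hn : n < w.length) :
    (u ∈ fset w n ∧ ¬(u ++ [a]) <:+: w ∧ ¬(u ++ [b]) <:+: w) ↔
      (u = w.drop (w.length - n) ∧ OccursOnce (w.drop (w.length - n)) w) := by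
  constructor
  · rintro ⟨hu, hna, hnb⟩
    obtain ⟨hlen, hinf⟩ := mem_fset.1 hu
    have hend : ∀ i, OccursAt u w i → i = w.length - n := by
      intro i hi
      by_contra hne
      have hb := occursAt_bound hi
      have hlt : i + u.length < w.length := by rw [hlen] at hb ⊢; omega
      obtain ⟨x, hx⟩ := occursAt_extend hi hlt
      cases x
      · exact hna hx
      · exact hnb hx
    obtain ⟨i, hi⟩ := infix_iff_occurs.1 hinf
    have hieq := hend i hi
    subst hieq
    have huq : u = w.drop (w.length - n) := by
      have := hi.2
      rw [hlen] at this
      rw [← this, List.take_of_length_le]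
      simp
      omega
    refine ⟨huq, ⟨w.length - n, ?_, ?_⟩⟩
    · rw [← huq]; exact hi
    · intro j hj
      rw [← huq] at hj
      exact hend j hj
  · rintro ⟨rfl, honce⟩
    have hmem : w.drop (w.length - n) ∈ fset w n :=
      mem_fset.2 ⟨by simp; omega, (w.drop_suffix _).isInfix⟩
    refine ⟨hmem, ?_, ?_⟩ <;>
    · intro hinf
      obtain ⟨i, hi⟩ := infix_iff_occurs.1 hinf
      have hocc : OccursAt (w.drop (w.length - n)) w i :=
        occursAt_of_prefix ⟨_, rfl⟩ hi
      have hsuf : OccursAt (w.drop (w.length - n)) w (w.length - n) := by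
        have := suffix_occursAt (w.drop_suffix (w.length - n))
        rwa [List.length_drop, show w.length - (w.length - (w.length - n)) = w.length - n by omega] at this
      obtain ⟨i₀, -, huniq⟩ := honce
      have e1 := huniq _ hocc
      have e2 := huniq _ hsuf
      have hb := occursAt_bound hi
      simp at hb
      omega

open Classical in
lemma fiber_card {w u : Word} {n : ℕ} (hu : u ∈ fset w n) :
    ((fset w (n+1)).filter (fun v => v.dropLast = u)).card =
      (if (u ++ [a]) <:+: w then 1 else 0) + (if (u ++ [b]) <:+: w then 1 else 0) := by
  have hlen : u.length = n := (mem_fset.1 hu).1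
  have hchar : ∀ v, (v ∈ (fset w (n+1)).filter (fun v => v.dropLast = u)) ↔
      ((v = u ++ [a] ∧ (u ++ [a]) <:+: w) ∨ (v = u ++ [b] ∧ (u ++ [b]) <:+: w)) := by
    intro v
    simp only [Finset.mem_filter, mem_fset]
    constructor
    · rintro ⟨⟨hvl, hvi⟩, hdl⟩
      have hne : v ≠ [] := by intro h; simp [h] at hvl
      have hv : v = u ++ [v.getLast hne] := by
        conv_lhs => rw [← List.dropLast_append_getLast hne]
        rw [hdl]
      cases hx : v.getLast hne
      · left; rw [hv, hx] at hvi ⊢; exact ⟨rfl, hvi⟩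
      · right; rw [hv, hx] at hvi ⊢; exact ⟨rfl, hvi⟩
    · rintro (⟨rfl, hi⟩ | ⟨rfl, hi⟩) <;>
        exact ⟨⟨by simp [hlen], hi⟩, by simp⟩
  by_cases ha : (u ++ [a]) <:+: w <;> by_cases hb : (u ++ [b]) <:+: w
  · have : (fset w (n+1)).filter (fun v => v.dropLast = u) = {u ++ [a], u ++ [b]} := by
      ext v; rw [hchar v]; simp [ha, hb]
    rw [this, if_pos ha, if_pos hb]
    rw [Finset.card_insert_of_notMem (by simp), Finset.card_singleton]
  · have : (fset w (n+1)).filter (fun v => v.dropLast = u) = {u ++ [a]} := by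
      ext v; rw [hchar v]; simp [ha, hb]
    simp [this, ha, hb]
  · have : (fset w (n+1)).filter (fun v => v.dropLast = u) = {u ++ [b]} := by
      ext v; rw [hchar v]; simp [ha, hb]
    simp [this, ha, hb]
  · have : (fset w (n+1)).filter (fun v => v.dropLast = u) = ∅ := by
      ext v; rw [hchar v]; simp [ha, hb]
    simp [this, ha, hb]

open Classical in
lemma right_identity (w : Word) (n : ℕ) (hn : n < w.length) :
    cf w (n+1) + (if OccursOnce (w.drop (w.length - n)) w then 1 else 0) =
      cf w n + rsf w n := by
  have hfib : ∀ v ∈ fset w (n+1), v.dropLast ∈ fset w n := by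
    intro v hv
    obtain ⟨hvl, hvi⟩ := mem_fset.1 hv
    exact mem_fset.2 ⟨by simp [hvl], (v.dropLast_prefix).isInfix.trans hvi⟩
  have hsum : cf w (n+1) = ∑ u ∈ fset w n,
      ((fset w (n+1)).filter (fun v => v.dropLast = u)).card :=
    Finset.card_eq_sum_card_fiberwise hfib
  have hsum2 : cf w (n+1) = ∑ u ∈ fset w n,
      ((if (u ++ [a]) <:+: w then 1 else 0) + (if (u ++ [b]) <:+: w then 1 else 0)) := by
    rw [hsum]
    exact Finset.sum_congr rfl (fun u hu => fiber_card hu)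
  -- dead count
  have hdead : ∑ u ∈ fset w n,
      (if (¬(u ++ [a]) <:+: w ∧ ¬(u ++ [b]) <:+: w) then 1 else 0) =
      (if OccursOnce (w.drop (w.length - n)) w then 1 else 0) := by
    rw [← Finset.card_filter]
    by_cases ho : OccursOnce (w.drop (w.length - n)) w
    · rw [if_pos ho]
      have : (fset w n).filter (fun u => ¬(u ++ [a]) <:+: w ∧ ¬(u ++ [b]) <:+: w) =
          {w.drop (w.length - n)} := by
        ext u
        rw [Finset.mem_filter, Finset.mem_singleton]
        constructor
        · rintro ⟨h1, h2, h3⟩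
          exact ((dead_iff hn).1 ⟨h1, h2, h3⟩).1
        · rintro rfl
          obtain ⟨h1, h2, h3⟩ := (dead_iff hn).2 ⟨rfl, ho⟩
          exact ⟨h1, h2, h3⟩
      rw [this, Finset.card_singleton]
    · rw [if_neg ho]
      have : (fset w n).filter (fun u => ¬(u ++ [a]) <:+: w ∧ ¬(u ++ [b]) <:+: w) = ∅ := by
        ext u
        rw [Finset.mem_filter]
        simp only [Finset.notMem_empty, iff_false]
        rintro ⟨h1, h2, h3⟩
        exact ho ((dead_iff hn).1 ⟨h1, h2, h3⟩).2
      rw [this, Finset.card_empty]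
  have hrs : ∑ u ∈ fset w n, (if IsRightSpecial u w then 1 else 0) = rsf w n := by
    rw [rsf, Finset.card_filter]
  have hpoint : ∀ u : Word,
      ((if (u ++ [a]) <:+: w then 1 else 0) + (if (u ++ [b]) <:+: w then 1 else 0))
        + (if (¬(u ++ [a]) <:+: w ∧ ¬(u ++ [b]) <:+: w) then 1 else 0)
      = 1 + (if IsRightSpecial u w then 1 else 0) := by
    intro u
    by_cases ha : (u ++ [a]) <:+: w <;> by_cases hb : (u ++ [b]) <:+: w <;>
      simp [ha, hb, IsRightSpecial]
  calc cf w (n+1) + (if OccursOnce (w.drop (w.length - n)) w then 1 else 0)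
      = ∑ u ∈ fset w n,
        (((if (u ++ [a]) <:+: w then 1 else 0) + (if (u ++ [b]) <:+: w then 1 else 0))
          + (if (¬(u ++ [a]) <:+: w ∧ ¬(u ++ [b]) <:+: w) then 1 else 0)) := by
        rw [Finset.sum_add_distrib, ← hsum2, hdead]
    _ = ∑ u ∈ fset w n, (1 + (if IsRightSpecial u w then 1 else 0)) :=
        Finset.sum_congr rfl (fun u _ => hpoint u)
    _ = cf w n + rsf w n := by
        rw [Finset.sum_add_distrib, hrs, Finset.sum_const, smul_eq_mul, mul_one, cf]

-- ### reversal transfer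

lemma fset_rev (w : Word) (n : ℕ) : fset w.reverse n = (fset w n).image List.reverse := by
  ext u
  simp only [Finset.mem_image, mem_fset]
  constructor
  · rintro ⟨hl, hi⟩
    refine ⟨u.reverse, ⟨by simp [hl], ?_⟩, by simp⟩
    rw [← List.reverse_infix]
    simpa using hi
  · rintro ⟨v, ⟨hl, hi⟩, rfl⟩
    refine ⟨by simp [hl], ?_⟩
    rw [← List.reverse_infix] at hi
    simpa using hi

lemma cf_rev (w : Word) (n : ℕ) : cf w.reverse n = cf w n := by
  rw [cf, cf, fset_rev, Finset.card_image_of_injective _ List.reverse_injective]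

lemma isRightSpecial_rev_iff {u w : Word} :
    IsRightSpecial u.reverse w.reverse ↔ IsLeftSpecial u w := by
  have h : ∀ x : AB, (u.reverse ++ [x]) <:+: w.reverse ↔ ([x] ++ u) <:+: w := by
    intro x
    rw [show u.reverse ++ [x] = ([x] ++ u).reverse by simp, List.reverse_infix]
  rw [IsRightSpecial, IsLeftSpecial, h a, h b]

open Classical in
lemma rsf_rev (w : Word) (n : ℕ) : rsf w.reverse n = lsf w n := by
  rw [rsf, lsf, fset_rev]
  rw [Finset.filter_image]
  rw [Finset.card_image_of_injective _ List.reverse_injective]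
  congr 1
  apply Finset.filter_congr
  intro u _
  simp [isRightSpecial_rev_iff]

open Classical in
lemma left_identity (w : Word) (n : ℕ) (hn : n < w.length) :
    cf w (n+1) + (if OccursOnce (w.take n) w then 1 else 0) =
      cf w n + lsf w n := by
  have hn' : n < w.reverse.length := by simpa using hn
  have h := right_identity w.reverse n hn'
  rw [cf_rev, cf_rev, rsf_rev] at h
  rw [← h]
  congr 1
  have hdt : w.reverse.drop (w.reverse.length - n) = (w.take n).reverse := by
    rw [List.reverse_take, List.length_reverse]
  rw [hdt]
  by_cases ho : OccursOnce (w.take n) w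
  · rw [if_pos ho, if_pos (occursOnce_rev ho)]
  · rw [if_neg ho, if_neg ?_]
    intro h2
    have := occursOnce_rev h2
    simp only [List.reverse_reverse] at this
    exact ho this

lemma cf_zero (w : Word) : cf w 0 = 1 := by
  have : fset w 0 = {([] : Word)} := by
    ext u
    rw [mem_fset, Finset.mem_singleton, List.length_eq_zero_iff]
    constructor
    · rintro ⟨rfl, -⟩; rfl
    · rintro rfl; exact ⟨rfl, ⟨[], w, by simp⟩⟩
  rw [cf, this, Finset.card_singleton]

lemma cf_length (w : Word) : cf w w.length = 1 := by
  have : fset w w.length = {w} := by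
    ext u
    rw [mem_fset, Finset.mem_singleton]
    constructor
    · rintro ⟨hl, hi⟩; exact hi.eq_of_length hl
    · rintro rfl; exact ⟨rfl, List.infix_rfl⟩
  rw [cf, this, Finset.card_singleton]

-- telescoping sums of the identities

open Classical in
lemma sum_ite_le (K N : ℕ) (hK : K ≤ N) :
    (∑ n ∈ Finset.range N, (if K ≤ n then 1 else 0)) + K = N := by
  have h2 : (∑ n ∈ Finset.range N, (if n < K then (1:ℕ) else 0)) = K := by
    rw [← Finset.card_filter]
    have : (Finset.range N).filter (fun n => n < K) = Finset.range K := by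
      ext n
      simp only [Finset.mem_filter, Finset.mem_range]
      omega
    rw [this, Finset.card_range]
  have h3 : (∑ n ∈ Finset.range N, ((if K ≤ n then (1:ℕ) else 0) + (if n < K then 1 else 0))) = N := by
    have : ∀ n, (if K ≤ n then (1:ℕ) else 0) + (if n < K then 1 else 0) = 1 := by
      intro n
      by_cases h : K ≤ n
      · rw [if_pos h, if_neg (by omega)]
      · rw [if_neg h, if_pos (by omega)]
    rw [Finset.sum_congr rfl (fun n _ => this n), Finset.sum_const, Finset.card_range,
      smul_eq_mul, mul_one]
  rw [Finset.sum_add_distrib, h2] at h3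
  omega

open Classical in
lemma sum_rsf (w : Word) :
    (∑ n ∈ Finset.range w.length, rsf w n) + Kp w = w.length := by
  have key : ∀ N ≤ w.length,
      cf w N + (∑ n ∈ Finset.range N, (if OccursOnce (w.drop (w.length - n)) w then 1 else 0)) =
      cf w 0 + ∑ n ∈ Finset.range N, rsf w n := by
    intro N hN
    induction N with
    | zero => simp
    | succ M ih =>
      rw [Finset.sum_range_succ, Finset.sum_range_succ]
      have hM : M < w.length := by omega
      have h1 := ih (by omega)
      have h2 := right_identity w M hM
      linarith
  have h := key w.length le_rfl
  rw [cf_length, cf_zero] at h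
  have heK : ∀ n, n < w.length →
      ((if OccursOnce (w.drop (w.length - n)) w then 1 else 0) = if Kp w ≤ n then 1 else 0) := by
    intro n hn
    by_cases hk : Kp w ≤ n
    · rw [if_pos hk, if_pos ((Kp_le_iff (le_of_lt hn)).1 hk)]
    · rw [if_neg hk, if_neg (fun ho => hk ((Kp_le_iff (le_of_lt hn)).2 ho))]
  rw [Finset.sum_congr rfl (fun n hn => heK n (Finset.mem_range.1 hn))] at h
  have hsum := sum_ite_le (Kp w) w.length (Kp_le_length w)
  omega

open Classical in
lemma sum_lsf (w : Word) :
    (∑ n ∈ Finset.range w.length, lsf w n) + Hp w = w.length := by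
  have key : ∀ N ≤ w.length,
      cf w N + (∑ n ∈ Finset.range N, (if OccursOnce (w.take n) w then 1 else 0)) =
      cf w 0 + ∑ n ∈ Finset.range N, lsf w n := by
    intro N hN
    induction N with
    | zero => simp
    | succ M ih =>
      rw [Finset.sum_range_succ, Finset.sum_range_succ]
      have hM : M < w.length := by omega
      have h1 := ih (by omega)
      have h2 := left_identity w M hM
      linarith
  have h := key w.length le_rfl
  rw [cf_length, cf_zero] at h
  have heH : ∀ n, n < w.length →
      ((if OccursOnce (w.take n) w then 1 else 0) = if Hp w ≤ n then 1 else 0) := by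
    intro n hn
    by_cases hk : Hp w ≤ n
    · rw [if_pos hk, if_pos ((Hp_le_iff (le_of_lt hn)).1 hk)]
    · rw [if_neg hk, if_neg (fun ho => hk ((Hp_le_iff (le_of_lt hn)).2 ho))]
  rw [Finset.sum_congr rfl (fun n hn => heH n (Finset.mem_range.1 hn))] at h
  have hsum := sum_ite_le (Hp w) w.length (Hp_le_length w)
  omega

-- ### pointwise values of rsf under the trapezoidal hypothesis

open Classical in
lemma rsf_pos {w : Word} {n : ℕ} (h : n < Rp w) : 1 ≤ rsf w n := by
  have : ¬ (∀ u : Word, u.length = n → ¬ IsRightSpecial u w) := by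
    intro hall
    exact absurd (Rp_le_iff.2 hall) (by omega)
  push_neg at this
  obtain ⟨u, hlen, hrs⟩ := this
  have hmem : u ∈ (fset w n).filter (fun u => IsRightSpecial u w) := by
    rw [Finset.mem_filter, mem_fset]
    exact ⟨⟨hlen, ((u.prefix_append [a]).isInfix).trans hrs.1⟩, hrs⟩
  rw [rsf]
  exact Finset.card_pos.2 ⟨u, hmem⟩

open Classical in
lemma rsf_eq_zero {w : Word} {n : ℕ} (h : Rp w ≤ n) : rsf w n = 0 := by
  rw [rsf, Finset.card_eq_zero]
  ext u
  simp only [Finset.mem_filter, mem_fset, Finset.notMem_empty, iff_false]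
  rintro ⟨⟨hlen, -⟩, hrs⟩
  exact (Rp_le_iff.1 h) u hlen hrs

open Classical in
lemma lsf_pos {w : Word} {n : ℕ} (h : n < Lp w) : 1 ≤ lsf w n := by
  have : ¬ (∀ u : Word, u.length = n → ¬ IsLeftSpecial u w) := by
    intro hall
    exact absurd (Lp_le_iff.2 hall) (by omega)
  push_neg at this
  obtain ⟨u, hlen, hls⟩ := this
  have hmem : u ∈ (fset w n).filter (fun u => IsLeftSpecial u w) := by
    rw [Finset.mem_filter, mem_fset]
    exact ⟨⟨hlen, ((List.suffix_append [a] u).isInfix).trans hls.1⟩, hls⟩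
  rw [lsf]
  exact Finset.card_pos.2 ⟨u, hmem⟩

open Classical in
lemma lsf_eq_zero {w : Word} {n : ℕ} (h : Lp w ≤ n) : lsf w n = 0 := by
  rw [lsf, Finset.card_eq_zero]
  ext u
  simp only [Finset.mem_filter, mem_fset, Finset.notMem_empty, iff_false]
  rintro ⟨⟨hlen, -⟩, hls⟩
  exact (Lp_le_iff.1 h) u hlen hls

lemma sum_all_one {s : Finset ℕ} {f : ℕ → ℕ} (h1 : ∀ i ∈ s, 1 ≤ f i)
    (h2 : ∑ i ∈ s, f i = s.card) : ∀ i ∈ s, f i = 1 := by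
  intro i hi
  by_contra hne
  have h3 : 2 ≤ f i := by have := h1 i hi; omega
  have h4 : (s.erase i).card ≤ ∑ j ∈ s.erase i, f j := by
    calc (s.erase i).card = ∑ j ∈ s.erase i, 1 := by simp
    _ ≤ ∑ j ∈ s.erase i, f j :=
      Finset.sum_le_sum (fun j hj => h1 j (Finset.mem_of_mem_erase hj))
  have h5 : f i + ∑ j ∈ s.erase i, f j = ∑ j ∈ s, f j := Finset.add_sum_erase s f hi
  have h6 : (s.erase i).card = s.card - 1 := Finset.card_erase_of_mem hi
  have h7 : 1 ≤ s.card := Finset.card_pos.2 ⟨i, hi⟩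
  omega

open Classical in
lemma rsf_eq_ite {w : Word} (htrap : IsTrapezoidal w) (n : ℕ) :
    rsf w n = if n < Rp w then 1 else 0 := by
  have hsum := sum_rsf w
  have hRl := Rp_le_length w
  have htr : w.length = Kp w + Rp w := htrap
  have hsub : ∑ m ∈ Finset.range w.length, rsf w m = ∑ m ∈ Finset.range (Rp w), rsf w m := by
    symm
    apply Finset.sum_subset
    · intro m hm
      rw [Finset.mem_range] at *
      omega
    · intro m hm hnm
      rw [Finset.mem_range] at *
      exact rsf_eq_zero (by omega)
  have hone : ∀ m ∈ Finset.range (Rp w), rsf w m = 1 := by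
    apply sum_all_one
    · intro m hm
      exact rsf_pos (Finset.mem_range.1 hm)
    · rw [Finset.card_range]
      omega
  by_cases h : n < Rp w
  · rw [if_pos h, hone n (Finset.mem_range.2 h)]
  · rw [if_neg h, rsf_eq_zero (by omega)]

-- ### at most one left special factor of each length (trapezoidal case)

open Classical in
lemma lsf_le_one {w : Word} (htrap : IsTrapezoidal w) (n : ℕ) : lsf w n ≤ 1 := by
  by_contra hcon
  push_neg at hcon
  have hex : ∃ m, 2 ≤ lsf w m := ⟨n, hcon⟩
  set S : Set ℕ := {m | 2 ≤ lsf w m} with hS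
  have hmem : sInf S ∈ S := Nat.sInf_mem hex
  set n₀ := sInf S with hn₀
  have h2 : 2 ≤ lsf w n₀ := hmem
  have hpos : 1 ≤ n₀ := by
    by_contra h0
    have : n₀ = 0 := by omega
    rw [this] at h2
    have : lsf w 0 ≤ cf w 0 := Finset.card_filter_le _ _
    rw [cf_zero] at this
    omega
  -- two distinct left special factors of length n₀
  obtain ⟨u₁, hu₁, u₂, hu₂, hne⟩ := Finset.one_lt_card.1 h2
  rw [Finset.mem_filter] at hu₁ hu₂
  obtain ⟨hu₁f, hu₁ls⟩ := hu₁
  obtain ⟨hu₂f, hu₂ls⟩ := hu₂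
  obtain ⟨hu₁l, hu₁i⟩ := mem_fset.1 hu₁f
  obtain ⟨hu₂l, hu₂i⟩ := mem_fset.1 hu₂f
  -- their dropLasts are left special of length n₀ - 1, hence equal
  have hdmem : ∀ u : Word, u.length = n₀ → IsLeftSpecial u w → u <:+: w →
      u.dropLast ∈ (fset w (n₀ - 1)).filter (fun v => IsLeftSpecial v w) := by
    intro u hl hls hi
    rw [Finset.mem_filter, mem_fset]
    refine ⟨⟨by simp [hl], (u.dropLast_prefix).isInfix.trans hi⟩,
      (prefix_append_infix (u.dropLast_prefix) [a]).trans hls.1,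
      (prefix_append_infix (u.dropLast_prefix) [b]).trans hls.2⟩
  have hcard1 : lsf w (n₀ - 1) ≤ 1 := by
    by_contra hc
    push_neg at hc
    have : n₀ ≤ n₀ - 1 := Nat.sInf_le (by exact hc : 2 ≤ lsf w (n₀ - 1))
    omega
  have hdeq : u₁.dropLast = u₂.dropLast := by
    have m1 := hdmem u₁ hu₁l hu₁ls hu₁i
    have m2 := hdmem u₂ hu₂l hu₂ls hu₂i
    by_contra hne2
    have : 2 ≤ lsf w (n₀ - 1) := Finset.one_lt_card.2 ⟨_, m1, _, m2, hne2⟩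
    omega
  set t := u₁.dropLast with ht
  have hne1 : u₁ ≠ [] := by intro h; rw [h] at hu₁l; simp at hu₁l; omega
  have hne2' : u₂ ≠ [] := by intro h; rw [h] at hu₂l; simp at hu₂l; omega
  set x₁ := u₁.getLast hne1 with hx₁
  set x₂ := u₂.getLast hne2' with hx₂
  have he1 : u₁ = t ++ [x₁] := (List.dropLast_append_getLast hne1).symm
  have he2 : u₂ = t ++ [x₂] := by
    rw [hdeq]
    exact (List.dropLast_append_getLast hne2').symm
  have hxne : x₁ ≠ x₂ := by
    intro h
    apply hne
    rw [he1, he2, h]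
  -- both [a] ++ t and [b] ++ t are right special of length n₀
  have hrs : ∀ y : AB, IsRightSpecial ([y] ++ t) w := by
    intro y
    have f1 : ([y] ++ t) ++ [x₁] <:+: w := by
      have : [y] ++ u₁ <:+: w := by cases y; exacts [hu₁ls.1, hu₁ls.2]
      rw [he1] at this
      rwa [List.append_assoc]
    have f2 : ([y] ++ t) ++ [x₂] <:+: w := by
      have : [y] ++ u₂ <:+: w := by cases y; exacts [hu₂ls.1, hu₂ls.2]
      rw [he2] at this
      rwa [List.append_assoc]
    cases hx1v : x₁ <;> cases hx2v : x₂
    · exact absurd (hx1v.trans hx2v.symm) hxne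
    · rw [hx1v] at f1; rw [hx2v] at f2; exact ⟨f1, f2⟩
    · rw [hx1v] at f1; rw [hx2v] at f2; exact ⟨f2, f1⟩
    · exact absurd (hx1v.trans hx2v.symm) hxne
  have hrmem : ∀ y : AB, ([y] ++ t) ∈ (fset w n₀).filter (fun v => IsRightSpecial v w) := by
    intro y
    rw [Finset.mem_filter, mem_fset]
    refine ⟨⟨?_, ?_⟩, hrs y⟩
    · have : t.length = n₀ - 1 := by rw [ht]; simp [hu₁l]
      simp [this]; omega
    · exact ((List.prefix_append ([y] ++ t) [x₁]).isInfix).trans (by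
        have : [y] ++ u₁ <:+: w := by cases y; exacts [hu₁ls.1, hu₁ls.2]
        rw [he1] at this
        rwa [List.append_assoc])
  have h2r : 2 ≤ rsf w n₀ :=
    Finset.one_lt_card.2 ⟨_, hrmem a, _, hrmem b, by simp⟩
  have := rsf_eq_ite htrap n₀
  by_cases h : n₀ < Rp w <;> simp [h] at this <;> omega

open Classical in
lemma lsf_eq_ite {w : Word} (htrap : IsTrapezoidal w) (n : ℕ) :
    lsf w n = if n < Lp w then 1 else 0 := by
  by_cases h : n < Lp w
  · rw [if_pos h]
    have h1 := lsf_pos h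
    have h2 := lsf_le_one htrap n
    omega
  · rw [if_neg h, lsf_eq_zero (by omega)]

open Classical in
lemma point_eq {w : Word} (htrap : IsTrapezoidal w) {n : ℕ} (hn : n < w.length) :
    ((if n < Lp w then 1 else 0) + (if n < Hp w then 1 else 0) : ℕ) =
      (if n < Rp w then 1 else 0) + (if n < Kp w then 1 else 0) := by
  have hL := left_identity w n hn
  have hR := right_identity w n hn
  rw [lsf_eq_ite htrap] at hL
  rw [rsf_eq_ite htrap] at hR
  have eH : (if OccursOnce (w.take n) w then (1:ℕ) else 0) = if Hp w ≤ n then 1 else 0 := by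
    by_cases hk : Hp w ≤ n
    · rw [if_pos hk, if_pos ((Hp_le_iff (le_of_lt hn)).1 hk)]
    · rw [if_neg hk, if_neg (fun ho => hk ((Hp_le_iff (le_of_lt hn)).2 ho))]
  have eK : (if OccursOnce (w.drop (w.length - n)) w then (1:ℕ) else 0) = if Kp w ≤ n then 1 else 0 := by
    by_cases hk : Kp w ≤ n
    · rw [if_pos hk, if_pos ((Kp_le_iff (le_of_lt hn)).1 hk)]
    · rw [if_neg hk, if_neg (fun ho => hk ((Kp_le_iff (le_of_lt hn)).2 ho))]
  rw [eH] at hL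
  rw [eK] at hR
  have c1 : (if Hp w ≤ n then (1:ℕ) else 0) + (if n < Hp w then 1 else 0) = 1 := by
    by_cases h : Hp w ≤ n
    · rw [if_pos h, if_neg (by omega)]
    · rw [if_neg h, if_pos (by omega)]
  have c2 : (if Kp w ≤ n then (1:ℕ) else 0) + (if n < Kp w then 1 else 0) = 1 := by
    by_cases h : Kp w ≤ n
    · rw [if_pos h, if_neg (by omega)]
    · rw [if_neg h, if_pos (by omega)]
  omega

theorem trapezoidal_main (w : Word) (htrap : IsTrapezoidal w) :
    ({Hp w, Lp w} : Set ℕ) = ({Kp w, Rp w} : Set ℕ) := by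
  have hH := Hp_le_length w
  have hL := Lp_le_length w
  have hK := Kp_le_length w
  have hR := Rp_le_length w
  have hmin : min (Hp w) (Lp w) = min (Kp w) (Rp w) := by
    rcases lt_trichotomy (min (Hp w) (Lp w)) (min (Kp w) (Rp w)) with h | h | h
    · exfalso
      have hn : min (Hp w) (Lp w) < w.length := by omega
      have := point_eq htrap hn
      have e1 : ¬ (min (Hp w) (Lp w) < Hp w ∧ min (Hp w) (Lp w) < Lp w) := by omega
      by_cases h1 : min (Hp w) (Lp w) < Hp w <;> by_cases h2 : min (Hp w) (Lp w) < Lp w <;>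
        simp [h1, h2, show min (Hp w) (Lp w) < Rp w by omega,
          show min (Hp w) (Lp w) < Kp w by omega] at this e1 <;> omega
    · exact h
    · exfalso
      have hn : min (Kp w) (Rp w) < w.length := by omega
      have := point_eq htrap hn
      have e1 : ¬ (min (Kp w) (Rp w) < Kp w ∧ min (Kp w) (Rp w) < Rp w) := by omega
      by_cases h1 : min (Kp w) (Rp w) < Kp w <;> by_cases h2 : min (Kp w) (Rp w) < Rp w <;>
        simp [h1, h2, show min (Kp w) (Rp w) < Hp w by omega,
          show min (Kp w) (Rp w) < Lp w by omega] at this e1 <;> omega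
  have hmax : max (Hp w) (Lp w) = max (Kp w) (Rp w) := by
    rcases lt_trichotomy (max (Hp w) (Lp w)) (max (Kp w) (Rp w)) with h | h | h
    · exfalso
      have hn : max (Hp w) (Lp w) < w.length := by omega
      have := point_eq htrap hn
      have h1 : ¬ (max (Hp w) (Lp w) < Hp w) := by omega
      have h2 : ¬ (max (Hp w) (Lp w) < Lp w) := by omega
      have h3 : max (Hp w) (Lp w) < Rp w ∨ max (Hp w) (Lp w) < Kp w := by omega
      rcases h3 with h3 | h3 <;> simp [h1, h2, h3] at this <;> omega
    · exact h
    · exfalso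
      have hn : max (Kp w) (Rp w) < w.length := by omega
      have := point_eq htrap hn
      have h1 : ¬ (max (Kp w) (Rp w) < Kp w) := by omega
      have h2 : ¬ (max (Kp w) (Rp w) < Rp w) := by omega
      have h3 : max (Kp w) (Rp w) < Hp w ∨ max (Kp w) (Rp w) < Lp w := by omega
      rcases h3 with h3 | h3 <;> simp [h1, h2, h3] at this <;> omega
  have pair_minmax : ∀ x y : ℕ, ({x, y} : Set ℕ) = {min x y, max x y} := by
    intro x y
    rcases le_total x y with h | h
    · rw [min_eq_left h, max_eq_right h]
    · rw [min_eq_right h, max_eq_left h, Set.pair_comm]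
  rw [pair_minmax (Hp w) (Lp w), pair_minmax (Kp w) (Rp w), hmin, hmax]

/-- for trapezoidal words, `{H w, L w} = {K w, R w}` as unordered pairs. -/
theorem trapezoidal_param_pair_eq (w : Word) (htrap : IsTrapezoidal w) :
    ({Hp w, Lp w} : Set ℕ) = ({Kp w, Rp w} : Set ℕ) := by
  exact trapezoidal_main w htrap
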